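/- Let ν ∈ (0,1), L_ν > 0, L > 0 and δ ≥ 0. Then for all real x, y ≥ 0: L_ν x^ν y + δ y − (L/2)(x² + y²) ≤ max{ (2ν)^{ν/(1−ν)} (2 − ν^{1/ν}) L_ν^{2/(1−ν)} / L^{(1+ν)/(1−ν)}, δ² (2 − ν^{1/ν}) / L }. -/

import Mathlib

/-!
Completing the square in `y` bounds the function by `Lν² x^{2ν} / L + δ² / L - (L/2) x²`.
Weighted AM–GM bounds `C s^ν - a s` on `s ≥ 0` by its maximal value `(1-ν) (C (ν/a)^ν)^{1/(1-ν)}`,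
which for `s = x²` is `(1-ν)` times the first entry of the maximum. Finally
`(1-ν) A + B ≤ (2-ν) max A B ≤ (2 - ν^{1/ν}) max A B` because `ν^{1/ν} ≤ ν`.
-/

open Real

theorem mul_sub_half_mul_sq_le {L : ℝ} (hL : 0 < L) (a b y : ℝ) :
    (a + b) * y - L / 2 * y ^ 2 ≤ a ^ 2 / L + b ^ 2 / L := by
  rw [← add_div, le_div_iff₀ hL]
  nlinarith [sq_nonneg (a + b - L * y), sq_nonneg (a - b)]

theorem mul_rpow_sub_mul_le {ν C a s : ℝ} (hν0 : 0 < ν) (hν1 : ν < 1) (hC : 0 ≤ C) (ha : 0 < a)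
    (hs : 0 ≤ s) : C * s ^ ν - a * s ≤ (1 - ν) * (C * (ν / a) ^ ν) ^ (1 - ν)⁻¹ := by
  set M := (C * (ν / a) ^ ν) ^ (1 - ν)⁻¹
  have hM : M ^ (1 - ν) = C * (ν / a) ^ ν := rpow_inv_rpow (by positivity) (by linarith)
  have hprod : (a * s / ν) ^ ν * M ^ (1 - ν) = C * s ^ ν := by
    rw [hM, mul_div_right_comm, mul_rpow (by positivity) hs]
    calc (a / ν) ^ ν * s ^ ν * (C * (ν / a) ^ ν)
        = C * s ^ ν * (a / ν * (ν / a)) ^ ν := by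
          rw [mul_rpow (by positivity) (by positivity)]; ring
      _ = C * s ^ ν := by rw [div_mul_div_cancel₀ hν0.ne', div_self ha.ne', one_rpow, mul_one]
  have hamgm := geom_mean_le_arith_mean2_weighted hν0.le (sub_nonneg.2 hν1.le)
    (by positivity : 0 ≤ a * s / ν) (by positivity : 0 ≤ M) (by ring)
  rw [hprod, mul_div_cancel₀ _ hν0.ne'] at hamgm
  linarith

theorem mul_sq_rpow_sub_half_mul_le {ν Lν L s : ℝ} (hν0 : 0 < ν) (hν1 : ν < 1) (hLν : 0 ≤ Lν)
    (hL : 0 < L) (hs : 0 ≤ s) :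
    Lν ^ 2 / L * s ^ ν - L / 2 * s ≤
      (1 - ν) * ((2 * ν) ^ (ν / (1 - ν)) * Lν ^ (2 / (1 - ν)) / L ^ ((1 + ν) / (1 - ν))) := by
  have hbase : Lν ^ 2 / L * (ν / (L / 2)) ^ ν = (2 * ν) ^ ν * Lν ^ (2 : ℝ) / L ^ (1 + ν) := by
    rw [div_div_eq_mul_div, mul_comm ν 2, div_rpow (by positivity) hL.le, rpow_add hL, rpow_one,
      rpow_two]
    ring
  calc Lν ^ 2 / L * s ^ ν - L / 2 * s
      ≤ (1 - ν) * (Lν ^ 2 / L * (ν / (L / 2)) ^ ν) ^ (1 - ν)⁻¹ :=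
        mul_rpow_sub_mul_le hν0 hν1 (by positivity) (by positivity) hs
    _ = _ := by
      rw [hbase, div_rpow (by positivity) (by positivity), mul_rpow (by positivity) (by positivity),
        ← rpow_mul (by positivity), ← rpow_mul hLν, ← rpow_mul hL.le]
      simp only [div_eq_mul_inv]

theorem holder_quadratic_noisy_max_bound_general (ν Lν L δ : ℝ) (hν : ν ∈ Set.Ioo (0 : ℝ) 1)
    (hLν : 0 < Lν) (hL : 0 < L) (x y : ℝ) (hx : 0 ≤ x) :
    Lν * x ^ ν * y + δ * y - L / 2 * (x ^ 2 + y ^ 2) ≤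
      max ((2 * ν) ^ (ν / (1 - ν)) * (2 - ν ^ (1 / ν)) * Lν ^ (2 / (1 - ν)) /
            L ^ ((1 + ν) / (1 - ν)))
          (δ ^ 2 * (2 - ν ^ (1 / ν)) / L) := by
  obtain ⟨hν0, hν1⟩ := hν
  set A := (2 * ν) ^ (ν / (1 - ν)) * Lν ^ (2 / (1 - ν)) / L ^ ((1 + ν) / (1 - ν))
  set B := δ ^ 2 / L
  have hroot : ν ^ (1 / ν) ≤ ν := rpow_le_self_of_le_one hν0.le hν1.le (one_le_one_div hν0 hν1.le)
  have hmax : max ((2 * ν) ^ (ν / (1 - ν)) * (2 - ν ^ (1 / ν)) * Lν ^ (2 / (1 - ν)) /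
      L ^ ((1 + ν) / (1 - ν))) (δ ^ 2 * (2 - ν ^ (1 / ν)) / L) = max A B * (2 - ν ^ (1 / ν)) := by
    rw [max_mul_of_nonneg _ _ (by linarith)]
    congr 1 <;> ring
  have hy_part := mul_sub_half_mul_sq_le hL (Lν * x ^ ν) δ y
  have hx_part := mul_sq_rpow_sub_half_mul_le hν0 hν1 hLν.le hL (sq_nonneg x)
  rw [mul_pow, rpow_pow_comm hx] at hy_part
  have hB : 0 ≤ B := by positivity
  rw [hmax]
  calc _ ≤ (1 - ν) * A + B := by
        rw [mul_div_right_comm] at hy_part; linarith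
    _ ≤ max A B * (2 - ν) := by
        nlinarith [le_max_left A B, le_max_right A B]
    _ ≤ max A B * (2 - ν ^ (1 / ν)) := by
        gcongr

/-- maximum of the concave function
`f(x,y) = L_ν x^ν y + δ y − (L/2)(x² + y²)` over the nonnegative quadrant. -/
theorem holder_quadratic_noisy_max_bound (ν Lν L δ : ℝ) (hν : ν ∈ Set.Ioo (0 : ℝ) 1)
    (hLν : 0 < Lν) (hL : 0 < L) (hδ : 0 ≤ δ) (x y : ℝ) (hx : 0 ≤ x) (hy : 0 ≤ y) :
    Lν * x ^ ν * y + δ * y - L / 2 * (x ^ 2 + y ^ 2) ≤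
      max ((2 * ν) ^ (ν / (1 - ν)) * (2 - ν ^ (1 / ν)) * Lν ^ (2 / (1 - ν)) /
            L ^ ((1 + ν) / (1 - ν)))
          (δ ^ 2 * (2 - ν ^ (1 / ν)) / L) :=
  holder_quadratic_noisy_max_bound_general ν Lν L δ hν hLν hL x y hx
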